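/- Let a < b be real numbers. Define β(z) = exp((1/4) Log((z − b)/(z − a))) for z ∈ ℂ \ [a, b], where Log is the principal branch of the logarithm (note (z−b)/(z−a) ∈ ℂ \ (−∞, 0] for z ∈ ℂ \ [a, b]), and define the 2×2 matrix S(z) with entries S₁₁(z) = S₂₂(z) = (β(z) + β(z)⁻¹)/2, S₁₂(z) = (β(z) − β(z)⁻¹)/(2i), S₂₁(z) = −(β(z) − β(z)⁻¹)/(2i). Then: (i) S is holomorphic on ℂ \ [a, b]; (ii) for every x ∈ (a, b) the limits S₊(x) = lim_{ε→0+} S(x + iε) and S₋(x) = lim_{ε→0+} S(x − iε) exist and S₊(x) = S₋(x) · [[0, 1], [−1, 0]]; (iii) S(z) → I (the identity matrix) as |z| → ∞. -/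

import Mathlib

/-!
Writing `M(w) = [[c, s], [-s, c]]` with `c = (w + w⁻¹)/2`, `s = (w - w⁻¹)/(2i)`, we have
`S = M ∘ β` definitionally. `M` is holomorphic on `ℂ ∖ {0}`, `M 1 = 1`, and
`M (i w) = M w · [[0,1],[-1,0]]`.
The Möbius map `q z = (z - b)/(z - a)` sends `ℂ ∖ [a,b]` into the slit plane, tends to `1` at
infinity, and sends `x ± iε` (`a < x < b`) to the negative real axis from the upper resp. lower
half plane. There the principal logarithm jumps by `2πi`, so its quarter exponential jumps by the
factor `i`.
-/

open Filter Topology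

noncomputable section

/-- `β(z) = ((z−b)/(z−a))^{1/4}` via the principal branch of the logarithm. -/
def betaFn (a b : ℝ) (z : ℂ) : ℂ :=
  Complex.exp ((1 / 4 : ℂ) * Complex.log ((z - (b : ℂ)) / (z - (a : ℂ))))

/-- The outside parametrix `S^∞(z)` built from `β`. -/
def Sout (a b : ℝ) (z : ℂ) : Matrix (Fin 2) (Fin 2) ℂ :=
  !![(betaFn a b z + (betaFn a b z)⁻¹) / 2, (betaFn a b z - (betaFn a b z)⁻¹) / (2 * Complex.I);
     -((betaFn a b z - (betaFn a b z)⁻¹) / (2 * Complex.I)),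
     (betaFn a b z + (betaFn a b z)⁻¹) / 2]

open Complex Bornology
open scoped Real

def outerMatrix (w : ℂ) : Matrix (Fin 2) (Fin 2) ℂ :=
  !![(w + w⁻¹) / 2, (w - w⁻¹) / (2 * I); -((w - w⁻¹) / (2 * I)), (w + w⁻¹) / 2]

theorem outerMatrix_one : outerMatrix 1 = 1 := by
  simp [outerMatrix, Matrix.one_fin_two]

theorem outerMatrix_I_mul (w : ℂ) : outerMatrix (I * w) = outerMatrix w * !![0, 1; -1, 0] := by
  have hinv : (I * w)⁻¹ = -(I * w⁻¹) := by rw [mul_inv, inv_I, neg_mul]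
  have hdiv (x : ℂ) : x / (2 * I) = -(x * I) / 2 := by rw [← div_div, div_I]; ring
  have hcos : (I * w + -(I * w⁻¹)) / 2 = -((w - w⁻¹) / (2 * I)) := by rw [hdiv]; ring
  have hsin : (I * w + I * w⁻¹) / (2 * I) = (w + w⁻¹) / 2 := by
    rw [hdiv]; linear_combination (-(w + w⁻¹) / 2) * I_sq
  rw [outerMatrix, outerMatrix, hinv, Matrix.mul_fin_two]
  ext i j
  fin_cases i <;> fin_cases j <;> simp [hcos, hsin]

theorem differentiableAt_outerMatrix_apply {w : ℂ} (hw : w ≠ 0) (i j : Fin 2) :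
    DifferentiableAt ℂ (fun w => outerMatrix w i j) w := by
  fin_cases i <;> fin_cases j <;>
    simp only [outerMatrix, Fin.zero_eta, Fin.mk_one, Fin.isValue, Matrix.of_apply,
      Matrix.cons_val', Matrix.cons_val_zero, Matrix.cons_val_one, Matrix.cons_val_fin_one] <;>
    fun_prop (disch := exact hw)

theorem continuousAt_outerMatrix {w : ℂ} (hw : w ≠ 0) : ContinuousAt outerMatrix w :=
  continuousAt_pi.2 fun i => continuousAt_pi.2 fun j =>
    (differentiableAt_outerMatrix_apply hw i j).continuousAt

theorem im_div_sub_sub (a b : ℝ) (z : ℂ) :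
    ((z - b) / (z - a)).im = z.im * (b - a) / normSq (z - a) := by
  rw [div_im, div_sub_div_same]
  congr 1
  simp only [sub_im, sub_re, ofReal_im, ofReal_re, sub_zero]
  ring

theorem im_div_sub_sub_pos {a b : ℝ} (hab : a < b) {z : ℂ} (hz : 0 < z.im) :
    0 < ((z - b) / (z - a)).im := by
  have hza : z - a ≠ 0 := fun h => by simpa [hz.ne'] using congrArg im h
  rw [im_div_sub_sub]
  exact div_pos (mul_pos hz (sub_pos.2 hab)) (normSq_pos.2 hza)

theorem im_div_sub_sub_neg {a b : ℝ} (hab : a < b) {z : ℂ} (hz : z.im < 0) :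
    ((z - b) / (z - a)).im < 0 := by
  have hza : z - a ≠ 0 := fun h => by simpa [hz.ne] using congrArg im h
  rw [im_div_sub_sub]
  exact div_neg_of_neg_of_pos (mul_neg_of_neg_of_pos hz (sub_pos.2 hab)) (normSq_pos.2 hza)

theorem div_sub_sub_mem_slitPlane {a b : ℝ} (hab : a < b) {z : ℂ}
    (hz : z ∉ (fun x : ℝ => (x : ℂ)) '' Set.Icc a b) :
    (z - b) / (z - a) ∈ slitPlane := by
  rcases lt_trichotomy z.im 0 with him | him | him
  · exact mem_slitPlane_iff.2 (.inr (im_div_sub_sub_neg hab him).ne)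
  · obtain ⟨x, rfl⟩ : ∃ x : ℝ, (x : ℂ) = z := ⟨z.re, ext rfl him.symm⟩
    have hx : x < a ∨ b < x := by
      by_contra! h
      exact hz ⟨x, h, rfl⟩
    rw [← ofReal_sub, ← ofReal_sub, ← ofReal_div, ofReal_mem_slitPlane]
    rcases hx with hx | hx
    · exact div_pos_of_neg_of_neg (by linarith) (by linarith)
    · exact div_pos (by linarith) (by linarith)
  · exact mem_slitPlane_iff.2 (.inr (im_div_sub_sub_pos hab him).ne')

theorem betaFn_ne_zero (a b : ℝ) (z : ℂ) : betaFn a b z ≠ 0 :=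
  exp_ne_zero _

theorem differentiableAt_betaFn {a b : ℝ} (hab : a < b) {z : ℂ}
    (hz : z ∉ (fun x : ℝ => (x : ℂ)) '' Set.Icc a b) :
    DifferentiableAt ℂ (betaFn a b) z := by
  have hza : z - a ≠ 0 := sub_ne_zero.2 fun h => hz ⟨a, ⟨le_rfl, hab.le⟩, h.symm⟩
  have hq : DifferentiableAt ℂ (fun z : ℂ => (z - b) / (z - a)) z := by
    fun_prop (disch := exact hza)
  exact ((hq.clog (div_sub_sub_mem_slitPlane hab hz)).const_mul (1 / 4)).cexp

theorem tendsto_ofReal_add_mul_I_nhdsWithin_im_pos (x : ℝ) :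
    Tendsto (fun ε : ℝ => (x : ℂ) + ε * I) (𝓝[>] 0) (𝓝[{z : ℂ | 0 < z.im}] x) := by
  refine tendsto_nhdsWithin_iff.2 ⟨?_, ?_⟩
  · have hc : Continuous fun ε : ℝ => (x : ℂ) + ε * I := by fun_prop
    exact (hc.tendsto' 0 x (by simp)).mono_left nhdsWithin_le_nhds
  · filter_upwards [self_mem_nhdsWithin] with ε (hε : 0 < ε)
    simpa using hε

theorem tendsto_ofReal_sub_mul_I_nhdsWithin_im_neg (x : ℝ) :
    Tendsto (fun ε : ℝ => (x : ℂ) - ε * I) (𝓝[>] 0) (𝓝[{z : ℂ | z.im < 0}] x) := by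
  refine tendsto_nhdsWithin_iff.2 ⟨?_, ?_⟩
  · have hc : Continuous fun ε : ℝ => (x : ℂ) - ε * I := by fun_prop
    exact (hc.tendsto' 0 x (by simp)).mono_left nhdsWithin_le_nhds
  · filter_upwards [self_mem_nhdsWithin] with ε (hε : 0 < ε)
    simpa using hε

theorem continuousAt_div_sub_sub {a b x : ℂ} (hxa : x ≠ a) :
    ContinuousAt (fun z : ℂ => (z - b) / (z - a)) x := by
  fun_prop (disch := exact sub_ne_zero.2 hxa)

theorem re_div_sub_sub_neg {a b x : ℝ} (hx : x ∈ Set.Ioo a b) :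
    (((x : ℂ) - b) / (x - a)).re < 0 := by
  rw [← ofReal_sub, ← ofReal_sub, ← ofReal_div, ofReal_re]
  exact div_neg_of_neg_of_pos (by linarith [hx.2]) (by linarith [hx.1])

theorem im_div_sub_sub_ofReal (a b x : ℝ) : (((x : ℂ) - b) / (x - a)).im = 0 := by
  rw [im_div_sub_sub, ofReal_im, zero_mul, zero_div]

theorem tendsto_betaFn_upper {a b x : ℝ} (hx : x ∈ Set.Ioo a b) :
    Tendsto (fun ε : ℝ => betaFn a b (x + ε * I)) (𝓝[>] 0)
      (𝓝 (exp (1 / 4 * (Real.log ‖((x : ℂ) - b) / (x - a)‖ + π * I)))) := by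
  have hxa : (x : ℂ) ≠ a := ofReal_injective.ne hx.1.ne'
  have hq : Tendsto (fun z : ℂ => (z - b) / (z - a)) (𝓝[{z : ℂ | 0 < z.im}] x)
      (𝓝[{w : ℂ | 0 ≤ w.im}] (((x : ℂ) - b) / (x - a))) :=
    tendsto_nhdsWithin_iff.2 ⟨(continuousAt_div_sub_sub hxa).mono_left nhdsWithin_le_nhds,
      eventually_nhdsWithin_of_forall fun z hz => (im_div_sub_sub_pos (hx.1.trans hx.2) hz).le⟩
  have hlog := tendsto_log_nhdsWithin_im_nonneg_of_re_neg_of_im_zero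
    (re_div_sub_sub_neg hx) (im_div_sub_sub_ofReal a b x)
  exact ((hlog.comp (hq.comp (tendsto_ofReal_add_mul_I_nhdsWithin_im_pos x))).const_mul
    (1 / 4)).cexp

theorem tendsto_betaFn_lower {a b x : ℝ} (hx : x ∈ Set.Ioo a b) :
    Tendsto (fun ε : ℝ => betaFn a b (x - ε * I)) (𝓝[>] 0)
      (𝓝 (exp (1 / 4 * (Real.log ‖((x : ℂ) - b) / (x - a)‖ - π * I)))) := by
  have hxa : (x : ℂ) ≠ a := ofReal_injective.ne hx.1.ne'
  have hq : Tendsto (fun z : ℂ => (z - b) / (z - a)) (𝓝[{z : ℂ | z.im < 0}] x)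
      (𝓝[{w : ℂ | w.im < 0}] (((x : ℂ) - b) / (x - a))) :=
    tendsto_nhdsWithin_iff.2 ⟨(continuousAt_div_sub_sub hxa).mono_left nhdsWithin_le_nhds,
      eventually_nhdsWithin_of_forall fun z hz => im_div_sub_sub_neg (hx.1.trans hx.2) hz⟩
  have hlog := tendsto_log_nhdsWithin_im_neg_of_re_neg_of_im_zero
    (re_div_sub_sub_neg hx) (im_div_sub_sub_ofReal a b x)
  exact ((hlog.comp (hq.comp (tendsto_ofReal_sub_mul_I_nhdsWithin_im_neg x))).const_mul
    (1 / 4)).cexp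

theorem exp_quarter_mul_add_pi_mul_I (L : ℂ) :
    exp (1 / 4 * (L + π * I)) = I * exp (1 / 4 * (L - π * I)) := by
  rw [show 1 / 4 * (L + π * I) = π / 2 * I + 1 / 4 * (L - π * I) by ring, exp_add,
    exp_pi_div_two_mul_I]

theorem tendsto_div_sub_sub_cobounded {𝕜 : Type*} [NormedField 𝕜] (a b : 𝕜) :
    Tendsto (fun z : 𝕜 => (z - b) / (z - a)) (cobounded 𝕜) (𝓝 1) := by
  have hinv : Tendsto (fun z : 𝕜 => (z - a)⁻¹) (cobounded 𝕜) (𝓝 0) :=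
    tendsto_inv₀_cobounded.comp (tendsto_sub_const_cobounded a)
  have hlim : Tendsto (fun z : 𝕜 => 1 + (a - b) * (z - a)⁻¹) (cobounded 𝕜) (𝓝 1) := by
    simpa using (hinv.const_mul (a - b)).const_add 1
  refine hlim.congr' ((eventually_ne_cobounded a).mono fun z hz => ?_)
  field_simp [sub_ne_zero.2 hz]
  ring

theorem tendsto_betaFn_cocompact (a b : ℝ) : Tendsto (betaFn a b) (cocompact ℂ) (𝓝 1) := by
  rw [← Metric.cobounded_eq_cocompact]
  have h := (((tendsto_div_sub_sub_cobounded (a : ℂ) b).clog one_mem_slitPlane).const_mul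
    (1 / 4 : ℂ)).cexp
  rwa [log_one, mul_zero, exp_zero] at h

/-- the outside parametrix `S` is holomorphic on `ℂ \ [a,b]`, has boundary
values on `(a,b)` satisfying the jump `S₊ = S₋ [[0,1],[−1,0]]`, and tends to the identity
matrix at infinity. -/
theorem Sout_RH_problem (a b : ℝ) (hab : a < b) :
    (∀ i j : Fin 2, DifferentiableOn ℂ (fun z => Sout a b z i j)
        (((fun x : ℝ => (x : ℂ)) '' Set.Icc a b)ᶜ)) ∧
    (∀ x ∈ Set.Ioo a b, ∃ Sp Sm : Matrix (Fin 2) (Fin 2) ℂ,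
      Tendsto (fun ε : ℝ => Sout a b ((x : ℂ) + ε * Complex.I)) (𝓝[>] 0) (𝓝 Sp) ∧
      Tendsto (fun ε : ℝ => Sout a b ((x : ℂ) - ε * Complex.I)) (𝓝[>] 0) (𝓝 Sm) ∧
      Sp = Sm * !![0, 1; -1, 0]) ∧
    Tendsto (fun z : ℂ => Sout a b z) (cocompact ℂ) (𝓝 (1 : Matrix (Fin 2) (Fin 2) ℂ)) := by
  refine ⟨fun i j z hz => ?_, fun x hx => ?_, ?_⟩
  · exact ((differentiableAt_outerMatrix_apply (betaFn_ne_zero a b z) i j).comp z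
      (differentiableAt_betaFn hab hz)).differentiableWithinAt
  · refine ⟨_, _,
      (continuousAt_outerMatrix (exp_ne_zero _)).tendsto.comp (tendsto_betaFn_upper hx),
      (continuousAt_outerMatrix (exp_ne_zero _)).tendsto.comp (tendsto_betaFn_lower hx), ?_⟩
    rw [exp_quarter_mul_add_pi_mul_I, outerMatrix_I_mul]
  · rw [← outerMatrix_one]
    exact (continuousAt_outerMatrix one_ne_zero).tendsto.comp (tendsto_betaFn_cocompact a b)
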